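/- Let α, σ be schedulers, t ∈ (0,1), γ̄ ∈ ℝ, σ̄₀ > 0, and let p_data be a probability density on ℝ^d with compact support. Define μ = (α_t, γ̄α_t)ᵀ and Σ = [[σ_t², γ̄σ_t²], [γ̄σ_t², σ̄₀² + γ̄²σ_t²]]. Then for every x_t ∈ ℝ^d with p_t(x_t) > 0 and every x̄ ∈ ℝ^d, the GLASS posterior p(z | x_t, x̄) associated to (μ, Σ) equals the standard posterior p_{1|t}(z | x_t), and consequently the GLASS denoiser satisfies D_{μ,Σ}(x_t, x̄) = D_t(x_t); that is, a second measurement of the form γ̄x_t + σ̄₀ε is uninformative about z and the GLASS denoiser at inner time s = 0 reduces to the standard denoiser. -/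

import Mathlib

open MeasureTheory Real Matrix
open scoped BigOperators

noncomputable def gauss1 (y m v : ℝ) : ℝ :=
  (2 * Real.pi * v) ^ (-(1:ℝ)/2) * Real.exp (-(y - m)^2 / (2 * v))

noncomputable def gauss2 (x m : Fin 2 → ℝ) (S : Matrix (Fin 2) (Fin 2) ℝ) : ℝ :=
  (2 * Real.pi)⁻¹ * S.det ^ (-(1:ℝ)/2) *
    Real.exp (-(1/2) * ((x - m) ⬝ᵥ (S⁻¹ *ᵥ (x - m))))

noncomputable def suffStat (μ : Fin 2 → ℝ) (S : Matrix (Fin 2) (Fin 2) ℝ)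
    (x : Fin 2 → ℝ) : ℝ :=
  (μ ⬝ᵥ (S⁻¹ *ᵥ x)) / (μ ⬝ᵥ (S⁻¹ *ᵥ μ))

structure IsScheduler (α σ : ℝ → ℝ) : Prop where
  contDiff_a : ContDiffOn ℝ 1 α (Set.Icc 0 1)
  contDiff_s : ContDiffOn ℝ 1 σ (Set.Icc 0 1)
  a0 : α 0 = 0
  a1 : α 1 = 1
  s0 : σ 0 = 1
  s1 : σ 1 = 0
  mono_a : StrictMonoOn α (Set.Icc 0 1)
  anti_s : StrictAntiOn σ (Set.Icc 0 1)

def IsProbDensity {d : ℕ} (p : (Fin d → ℝ) → ℝ) : Prop :=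
  Measurable p ∧ (∀ z, 0 ≤ p z) ∧ (∫ z, p z) = 1

noncomputable def marginal {d : ℕ} (α σ : ℝ → ℝ) (p : (Fin d → ℝ) → ℝ)
    (t : ℝ) (x : Fin d → ℝ) : ℝ :=
  ∫ z, (∏ j, gauss1 (x j) (α t * z j) ((σ t)^2)) * p z

noncomputable def post {d : ℕ} (α σ : ℝ → ℝ) (p : (Fin d → ℝ) → ℝ)
    (t : ℝ) (z x : Fin d → ℝ) : ℝ :=
  (∏ j, gauss1 (x j) (α t * z j) ((σ t)^2)) * p z / marginal α σ p t x

noncomputable def denoiser {d : ℕ} (α σ : ℝ → ℝ) (p : (Fin d → ℝ) → ℝ)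
    (t : ℝ) (x : Fin d → ℝ) : Fin d → ℝ :=
  ∫ z, post α σ p t z x • z

noncomputable def glassLik {d : ℕ} (μ : Fin 2 → ℝ) (S : Matrix (Fin 2) (Fin 2) ℝ)
    (x1 x2 z : Fin d → ℝ) : ℝ :=
  ∏ j, gauss2 ![x1 j, x2 j] (z j • μ) S

noncomputable def glassZ {d : ℕ} (μ : Fin 2 → ℝ) (S : Matrix (Fin 2) (Fin 2) ℝ)
    (p : (Fin d → ℝ) → ℝ) (x1 x2 : Fin d → ℝ) : ℝ :=
  ∫ w, glassLik μ S x1 x2 w * p w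

noncomputable def glassPost {d : ℕ} (μ : Fin 2 → ℝ) (S : Matrix (Fin 2) (Fin 2) ℝ)
    (p : (Fin d → ℝ) → ℝ) (x1 x2 z : Fin d → ℝ) : ℝ :=
  glassLik μ S x1 x2 z * p z / glassZ μ S p x1 x2

noncomputable def glassDenoiser {d : ℕ} (μ : Fin 2 → ℝ) (S : Matrix (Fin 2) (Fin 2) ℝ)
    (p : (Fin d → ℝ) → ℝ) (x1 x2 : Fin d → ℝ) : Fin d → ℝ :=
  ∫ z, glassPost μ S p x1 x2 z • z

/-!
With this choice of `μ` and `Σ`, the pair `(x₁, x₂)` is distributed as `x₁ = α_t z + σ_t ε` and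
`x₂ = γ̄ x₁ + σ̄₀ ε'` with `ε'` independent of `(z, ε)`. Accordingly the bivariate Gaussian
likelihood factorises as `N(x₁; α_t z, σ_t²) · N(x₂; γ̄ x₁, σ̄₀²)`, whose second factor does not
depend on `z`: it cancels between the numerator and the normalising integral of the posterior.
-/

lemma IsScheduler.sigma_pos {α σ : ℝ → ℝ} (hsch : IsScheduler α σ) {t : ℝ}
    (ht : t ∈ Set.Ioo (0 : ℝ) 1) : 0 < σ t := by
  have h := hsch.anti_s (Set.Ioo_subset_Icc_self ht) ⟨zero_le_one, le_rfl⟩ ht.2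
  rwa [hsch.s1] at h

lemma gauss1_pos (y m : ℝ) {v : ℝ} (hv : 0 < v) : 0 < gauss1 y m v := by
  have : 0 < 2 * π * v := by positivity
  unfold gauss1
  positivity

section GlassCovariance

variable {γ s s₀ : ℝ}

lemma det_glassCov :
    (!![s ^ 2, γ * s ^ 2; γ * s ^ 2, s₀ ^ 2 + γ ^ 2 * s ^ 2] : Matrix (Fin 2) (Fin 2) ℝ).det
      = s ^ 2 * s₀ ^ 2 := by
  rw [det_fin_two_of]
  ring

lemma inv_glassCov (hs : s ≠ 0) (hs₀ : s₀ ≠ 0) :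
    (!![s ^ 2, γ * s ^ 2; γ * s ^ 2, s₀ ^ 2 + γ ^ 2 * s ^ 2] : Matrix (Fin 2) (Fin 2) ℝ)⁻¹
      = !![(s₀ ^ 2 + γ ^ 2 * s ^ 2) / (s ^ 2 * s₀ ^ 2), -γ / s₀ ^ 2; -γ / s₀ ^ 2, 1 / s₀ ^ 2] := by
  apply inv_eq_right_inv
  ext i j
  fin_cases i <;> fin_cases j <;>
    simp only [one_div, Fin.zero_eta, Fin.isValue, Fin.mk_one, mul_apply, of_apply, cons_val',
      cons_val_fin_one, cons_val_zero, cons_val_one, Fin.sum_univ_two, one_apply, zero_ne_one,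
      one_ne_zero, ↓reduceIte] <;>
    field_simp <;> ring

lemma inv_two_pi_mul_rpow_neg_half {a b : ℝ} (ha : 0 ≤ a) (hb : 0 ≤ b) :
    (2 * π)⁻¹ * (a * b) ^ (-(1 : ℝ) / 2)
      = (2 * π * a) ^ (-(1 : ℝ) / 2) * (2 * π * b) ^ (-(1 : ℝ) / 2) := by
  have h2π : 0 < 2 * π := by positivity
  have hsq : (2 * π) ^ (-(1 : ℝ) / 2) * (2 * π) ^ (-(1 : ℝ) / 2) = (2 * π)⁻¹ := by
    rw [← rpow_add h2π, show -(1 : ℝ) / 2 + -(1 : ℝ) / 2 = -1 by norm_num, rpow_neg_one]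
  rw [mul_rpow ha hb, mul_rpow h2π.le ha, mul_rpow h2π.le hb, ← hsq]
  ring

lemma gauss2_glassCov (a b z αt : ℝ) (hs : s ≠ 0) (hs₀ : s₀ ≠ 0) :
    gauss2 ![a, b] (z • ![αt, γ * αt])
        !![s ^ 2, γ * s ^ 2; γ * s ^ 2, s₀ ^ 2 + γ ^ 2 * s ^ 2]
      = gauss1 a (αt * z) (s ^ 2) * gauss1 b (γ * a) (s₀ ^ 2) := by
  have quadForm : (![a, b] - z • ![αt, γ * αt]) ⬝ᵥ
      (!![(s₀ ^ 2 + γ ^ 2 * s ^ 2) / (s ^ 2 * s₀ ^ 2), -γ / s₀ ^ 2; -γ / s₀ ^ 2, 1 / s₀ ^ 2]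
        *ᵥ (![a, b] - z • ![αt, γ * αt]))
      = (a - αt * z) ^ 2 / s ^ 2 + (b - γ * a) ^ 2 / s₀ ^ 2 := by
    simp only [dotProduct, mulVec, smul_cons, smul_eq_mul, smul_empty, Pi.sub_apply, of_apply,
      cons_val', cons_val_fin_one, Fin.sum_univ_two, Fin.isValue, cons_val_zero, cons_val_one]
    field_simp
    ring
  have expSplit : exp (-(1 / 2) * ((a - αt * z) ^ 2 / s ^ 2 + (b - γ * a) ^ 2 / s₀ ^ 2))
      = exp (-(a - αt * z) ^ 2 / (2 * s ^ 2)) * exp (-(b - γ * a) ^ 2 / (2 * s₀ ^ 2)) := by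
    rw [← exp_add]
    congr 1
    field_simp
    ring
  rw [gauss2, gauss1, gauss1, det_glassCov, inv_glassCov hs hs₀, quadForm, expSplit,
    inv_two_pi_mul_rpow_neg_half (sq_nonneg s) (sq_nonneg s₀)]
  ring

lemma glassLik_glassCov {d : ℕ} (x₁ x₂ z : Fin d → ℝ) (αt : ℝ) (hs : s ≠ 0) (hs₀ : s₀ ≠ 0) :
    glassLik ![αt, γ * αt] !![s ^ 2, γ * s ^ 2; γ * s ^ 2, s₀ ^ 2 + γ ^ 2 * s ^ 2] x₁ x₂ z
      = (∏ j, gauss1 (x₁ j) (αt * z j) (s ^ 2)) * ∏ j, gauss1 (x₂ j) (γ * x₁ j) (s₀ ^ 2) := by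
  rw [glassLik, ← Finset.prod_mul_distrib]
  exact Finset.prod_congr rfl fun j _ => gauss2_glassCov _ _ _ _ hs hs₀

end GlassCovariance

section PosteriorComparison

variable {d : ℕ} {α σ : ℝ → ℝ} {t : ℝ} {μ : Fin 2 → ℝ} {S : Matrix (Fin 2) (Fin 2) ℝ}
  {p : (Fin d → ℝ) → ℝ} {x₁ x₂ : Fin d → ℝ} {C : ℝ}

lemma glassPost_eq_post_of_glassLik_eq_mul (hC : C ≠ 0)
    (hlik : ∀ z, glassLik μ S x₁ x₂ z = (∏ j, gauss1 (x₁ j) (α t * z j) (σ t ^ 2)) * C)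
    (z : Fin d → ℝ) : glassPost μ S p x₁ x₂ z = post α σ p t z x₁ := by
  have hZ : glassZ μ S p x₁ x₂ = marginal α σ p t x₁ * C := by
    rw [glassZ, marginal, ← integral_mul_const]
    congr 1
    funext w
    rw [hlik w]
    ring
  rw [glassPost, post, hZ, hlik z, mul_right_comm, mul_div_mul_right _ _ hC]

lemma glassDenoiser_eq_denoiser_of_glassPost_eq
    (hpost : ∀ z, glassPost μ S p x₁ x₂ z = post α σ p t z x₁) :
    glassDenoiser μ S p x₁ x₂ = denoiser α σ p t x₁ := by
  simp only [glassDenoiser, denoiser, hpost]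

end PosteriorComparison

theorem stmt12_general {d : ℕ} (α σ : ℝ → ℝ) (hsch : IsScheduler α σ)
    (t : ℝ) (ht : t ∈ Set.Ioo (0:ℝ) 1) (γb σ0 : ℝ) (hσ0 : 0 < σ0)
    (p : (Fin d → ℝ) → ℝ)
    (μ : Fin 2 → ℝ) (hμ : μ = ![α t, γb * α t])
    (S : Matrix (Fin 2) (Fin 2) ℝ)
    (hS : S = !![(σ t)^2, γb * (σ t)^2; γb * (σ t)^2, σ0^2 + γb^2 * (σ t)^2]) :
    ∀ xt : Fin d → ℝ, 0 < marginal α σ p t xt → ∀ xb : Fin d → ℝ,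
      (∀ z : Fin d → ℝ, glassPost μ S p xt xb z = post α σ p t z xt) ∧
      glassDenoiser μ S p xt xb = denoiser α σ p t xt := by
  subst hμ hS
  intro xt _ xb
  have hσt := hsch.sigma_pos ht
  have hlik z := glassLik_glassCov (γ := γb) xt xb z (α t) hσt.ne' hσ0.ne'
  have hC : ∏ j, gauss1 (xb j) (γb * xt j) (σ0 ^ 2) ≠ 0 :=
    (Finset.prod_pos fun j _ => gauss1_pos _ _ (pow_pos hσ0 2)).ne'
  have hpost := glassPost_eq_post_of_glassLik_eq_mul (p := p) hC hlik
  exact ⟨hpost, glassDenoiser_eq_denoiser_of_glassPost_eq hpost⟩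

theorem stmt12 {d : ℕ} (α σ : ℝ → ℝ) (hsch : IsScheduler α σ)
    (t : ℝ) (ht : t ∈ Set.Ioo (0:ℝ) 1) (γb σ0 : ℝ) (hσ0 : 0 < σ0)
    (p : (Fin d → ℝ) → ℝ) (hp : IsProbDensity p) (hps : HasCompactSupport p)
    (μ : Fin 2 → ℝ) (hμ : μ = ![α t, γb * α t])
    (S : Matrix (Fin 2) (Fin 2) ℝ)
    (hS : S = !![(σ t)^2, γb * (σ t)^2; γb * (σ t)^2, σ0^2 + γb^2 * (σ t)^2]) :
    ∀ xt : Fin d → ℝ, 0 < marginal α σ p t xt → ∀ xb : Fin d → ℝ,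
      (∀ z : Fin d → ℝ, glassPost μ S p xt xb z = post α σ p t z xt) ∧
      glassDenoiser μ S p xt xb = denoiser α σ p t xt :=
  stmt12_general α σ hsch t ht γb σ0 hσ0 p μ hμ S hS
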